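/- arXiv:2301.02060 — 5 statements merged into one kernel-verified Lean document; each statement's English description precedes it below -/
import Mathlib

section
/- Let X ⊆ ℝ^n and Y ⊆ ℝ^m be nonempty compact convex sets with Y of diameter at most D_y, let p, q be proper closed convex functions with dom p = X, dom q = Y, and let h : ℝ^n×ℝ^m → ℝ be differentiable with L-Lipschitz gradient on X×Y and with h(x,·) concave for each x ∈ X. Fix ε > 0, ε̂ > 0, ŷ⁰ ∈ Y, x^k ∈ X, and define H*_ε(x) = max_{y∈Y}{h(x,y)+p(x)−q(y) − ε‖y−ŷ⁰‖²/(4D_y)} for x ∈ X and h_k(x,y) = h(x,y) − ε‖y−ŷ⁰‖²/(4D_y) + L‖x−x^k‖². Suppose (x^{k+1}, y^{k+1}) ∈ X×Y is an ε̂-primal-dual stationary point of min_x max_y {h_k(x,y)+p(x)−q(y)}, i.e. there exist s ∈ ∂p(x^{k+1}), t ∈ ∂q(y^{k+1}) with ‖∇_x h_k(x^{k+1},y^{k+1}) + s‖ ≤ ε̂ and ‖∇_y h_k(x^{k+1},y^{k+1}) − t‖ ≤ ε̂. Then H*_ε(x^k) − H*_ε(x^{k+1}) ≥ L‖x^k −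 x^{k+1}‖² − (L^{-1} + 4D_y²L·ε^{-2})·ε̂². -/
/-!
Write `Φ x y = h x y + p x - q y - c‖y - ŷ⁰‖²` with `c = ε/(4D_y)`, so `H*_ε x = sup_y Φ x y`.
For fixed `x`, `Φ x` is `2c`-strongly concave, so at a point where its gradient is within `δ` of a
supergradient its value is within `δ²/(4c)` of the maximum: this bounds `H*_ε(x^{k+1})` above by
`Φ(x^{k+1}, y^{k+1}) + ε̂²/(4c)`, while `H*_ε(x^k) ≥ Φ(x^k, y^{k+1})`. In `x`, the descent lemma for
the `L`-smooth `h(·, y^{k+1})`, the subgradient inequality for `p` and the `2L`-strong convexity of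
the proximal term give `Φ(x^k, y^{k+1}) - Φ(x^{k+1}, y^{k+1}) ≥ L‖x^k - x^{k+1}‖² - ε̂²/(2L)`. The
two error terms are absorbed by AM–GM.
-/

open Set
open AffineMap (lineMap)

lemma sub_div_two_le_sub_of_hasDerivAt {φ φ' : ℝ → ℝ} {a b : ℝ}
    (hφ : ∀ τ ∈ Icc (0 : ℝ) 1, HasDerivAt φ (φ' τ) τ)
    (hφ' : ∀ τ ∈ Ioo (0 : ℝ) 1, a - b * τ ≤ φ' τ) :
    a - b / 2 ≤ φ 1 - φ 0 := by
  set F : ℝ → ℝ := fun τ => φ τ - a * τ + b / 2 * τ ^ 2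
  have hF : ∀ τ ∈ Icc (0 : ℝ) 1, HasDerivAt F (φ' τ - a + b * τ) τ := fun τ hτ =>
    (((hφ τ hτ).sub ((hasDerivAt_id τ).const_mul a)).add
      ((hasDerivAt_pow 2 τ).const_mul (b / 2))).congr_deriv (by norm_num; ring)
  have hmono : MonotoneOn F (Icc 0 1) := by
    refine monotoneOn_of_hasDerivWithinAt_nonneg (f' := fun τ => φ' τ - a + b * τ)
      (convex_Icc 0 1)
      (fun τ hτ => (hF τ hτ).continuousAt.continuousWithinAt) (fun τ hτ => ?_) (fun τ hτ => ?_)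
    · rw [interior_Icc] at hτ ⊢
      exact (hF τ (Ioo_subset_Icc_self hτ)).hasDerivWithinAt
    · rw [interior_Icc] at hτ
      linarith [hφ' τ hτ]
  have := hmono (left_mem_Icc.2 zero_le_one) (right_mem_Icc.2 zero_le_one) zero_le_one
  simp only [F] at this
  linarith

lemma mul_sub_mul_sq_le {a μ r : ℝ} (hμ : 0 < μ) : a * r - μ * r ^ 2 ≤ a ^ 2 / (4 * μ) := by
  rw [le_div_iff₀ (by positivity)]
  nlinarith [sq_nonneg (2 * μ * r - a)]

lemma sq_div_add_sq_div_le {L ε D δ : ℝ} (hL : 0 < L) (hε : 0 < ε) (hD : 0 < D) :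
    δ ^ 2 / (4 * (ε / (4 * D))) + δ ^ 2 / (2 * L) ≤ (L⁻¹ + 4 * D ^ 2 * L / ε ^ 2) * δ ^ 2 := by
  have hamgm := mul_sub_mul_sq_le (a := 1) (r := D / ε) (mul_pos four_pos hL)
  have hlhs : δ ^ 2 / (4 * (ε / (4 * D))) + δ ^ 2 / (2 * L) = (D / ε + (2 * L)⁻¹) * δ ^ 2 := by
    field_simp
  have hinv : 1 ^ 2 / (4 * (4 * L)) + (2 * L)⁻¹ ≤ L⁻¹ := by
    field_simp; norm_num
  rw [hlhs, show 4 * D ^ 2 * L / ε ^ 2 = 4 * L * (D / ε) ^ 2 by ring]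
  exact mul_le_mul_of_nonneg_right (by linarith) (sq_nonneg δ)

section InnerProductSpace

variable {E : Type*} [NormedAddCommGroup E] [InnerProductSpace ℝ E] [CompleteSpace E]

open scoped RealInnerProductSpace

lemma HasGradientAt.hasDerivAt_comp_lineMap {f : E → ℝ} {g x y : E} {τ : ℝ}
    (hf : HasGradientAt f g (lineMap x y τ)) :
    HasDerivAt (f ∘ lineMap x y) ⟪g, y - x⟫ τ := by
  simpa using hf.hasFDerivAt.comp_hasDerivAt τ AffineMap.hasDerivAt_lineMap

lemma ConcaveOn.le_add_inner_of_hasGradientAt {s : Set E} {f : E → ℝ} {g x y : E}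
    (hf : ConcaveOn ℝ s f) (hx : x ∈ s) (hy : y ∈ s) (hg : HasGradientAt f g x) :
    f y ≤ f x + ⟪g, y - x⟫ := by
  have hline := hf.comp_affineMap (lineMap x y)
  have := hline.slope_le_of_hasDerivAt (x := 0) (y := 1) (by simpa) (by simpa) zero_lt_one
    (HasGradientAt.hasDerivAt_comp_lineMap (by simpa))
  simp only [slope_def_field, Function.comp_apply, AffineMap.lineMap_apply_one,
    AffineMap.lineMap_apply_zero, sub_zero, div_one] at this
  linarith

lemma Convex.add_inner_sub_half_mul_sq_le {s : Set E} (hs : Convex ℝ s) {f : E → ℝ} {g : E → E}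
    {x y : E} {L : ℝ} (hx : x ∈ s) (hy : y ∈ s) (hf : ∀ z ∈ s, HasGradientAt f (g z) z)
    (hg : ∀ z ∈ s, ‖g z - g x‖ ≤ L * ‖z - x‖) :
    f x + ⟪g x, y - x⟫ - L / 2 * ‖y - x‖ ^ 2 ≤ f y := by
  have hseg : ∀ τ ∈ Icc (0 : ℝ) 1, lineMap x y τ ∈ s := fun τ hτ => hs.lineMap_mem hx hy hτ
  have key := sub_div_two_le_sub_of_hasDerivAt (φ := f ∘ lineMap x y)
    (a := ⟪g x, y - x⟫) (b := L * ‖y - x‖ ^ 2)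
    (fun τ hτ => (hf _ (hseg τ hτ)).hasDerivAt_comp_lineMap) (fun τ hτ => ?_)
  · simp only [Function.comp_apply, AffineMap.lineMap_apply_one,
      AffineMap.lineMap_apply_zero] at key
    linarith
  · have hz : lineMap x y τ - x = τ • (y - x) := by simp [AffineMap.lineMap_apply_module']
    have hlip := hg _ (hseg τ (Ioo_subset_Icc_self hτ))
    rw [hz, norm_smul, Real.norm_of_nonneg hτ.1.le] at hlip
    have hcs : ⟪g x, y - x⟫ - ⟪g (lineMap x y τ), y - x⟫
        ≤ ‖g (lineMap x y τ) - g x‖ * ‖y - x‖ := by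
      rw [← inner_sub_left, norm_sub_rev]
      exact real_inner_le_norm _ _
    nlinarith [mul_le_mul_of_nonneg_right hlip (norm_nonneg (y - x))]

lemma ConcaveOn.sub_sub_mul_sq_le {s : Set E} {f q : E → ℝ} {g t y₀ y₁ y : E} {c δ : ℝ}
    (hf : ConcaveOn ℝ s f) (hy₁ : y₁ ∈ s) (hy : y ∈ s) (hg : HasGradientAt f g y₁)
    (ht : q y₁ + ⟪t, y - y₁⟫ ≤ q y) (hc : 0 < c) (hδ : ‖g - (2 * c) • (y₁ - y₀) - t‖ ≤ δ) :
    f y - q y - c * ‖y - y₀‖ ^ 2 ≤ f y₁ - q y₁ - c * ‖y₁ - y₀‖ ^ 2 + δ ^ 2 / (4 * c) := by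
  have hfy := hf.le_add_inner_of_hasGradientAt hy₁ hy hg
  have hsq : c * ‖y - y₀‖ ^ 2 = c * (‖y₁ - y₀‖ ^ 2 + 2 * ⟪y₁ - y₀, y - y₁⟫ + ‖y - y₁‖ ^ 2) := by
    rw [← norm_add_sq_real, sub_add_sub_cancel']
  have hinner : ⟪g - (2 * c) • (y₁ - y₀) - t, y - y₁⟫
      = ⟪g, y - y₁⟫ - 2 * c * ⟪y₁ - y₀, y - y₁⟫ - ⟪t, y - y₁⟫ := by
    rw [inner_sub_left, inner_sub_left, real_inner_smul_left]
  have hcs : ⟪g - (2 * c) • (y₁ - y₀) - t, y - y₁⟫ ≤ δ * ‖y - y₁‖ :=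
    (real_inner_le_norm _ _).trans (mul_le_mul_of_nonneg_right hδ (norm_nonneg _))
  have hquad := mul_sub_mul_sq_le (a := δ) (r := ‖y - y₁‖) hc
  linarith

lemma Convex.mul_sq_sub_le_of_norm_le {s : Set E} (hs : Convex ℝ s) {f p : E → ℝ} {g : E → E}
    {σ x x₁ : E} {L δ : ℝ} (hx₁ : x₁ ∈ s) (hx : x ∈ s) (hf : ∀ z ∈ s, HasGradientAt f (g z) z)
    (hg : ∀ z ∈ s, ‖g z - g x₁‖ ≤ L * ‖z - x₁‖) (hσ : p x₁ + ⟪σ, x - x₁⟫ ≤ p x) (hL : 0 < L)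
    (hδ : ‖g x₁ + (2 * L) • (x₁ - x) + σ‖ ≤ δ) :
    L * ‖x - x₁‖ ^ 2 - δ ^ 2 / (2 * L) ≤ f x + p x - (f x₁ + p x₁) := by
  have hdesc := hs.add_inner_sub_half_mul_sq_le hx₁ hx hf hg
  have hinner : ⟪g x₁ + (2 * L) • (x₁ - x) + σ, x - x₁⟫
      = ⟪g x₁, x - x₁⟫ - 2 * L * ‖x - x₁‖ ^ 2 + ⟪σ, x - x₁⟫ := by
    rw [inner_add_left, inner_add_left, real_inner_smul_left, ← neg_sub x x₁, inner_neg_left,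
      real_inner_self_eq_norm_sq]
    ring
  have hcs : -(δ * ‖x - x₁‖) ≤ ⟪g x₁ + (2 * L) • (x₁ - x) + σ, x - x₁⟫ :=
    neg_le_of_abs_le ((abs_real_inner_le_norm _ _).trans
      (mul_le_mul_of_nonneg_right hδ (norm_nonneg _)))
  have hquad := mul_sub_mul_sq_le (a := δ) (r := ‖x - x₁‖) (half_pos hL)
  have h2 : δ ^ 2 / (4 * (L / 2)) = δ ^ 2 / (2 * L) := by ring
  linarith
end InnerProductSpace

theorem potential_descent_general {n m : ℕ}
    (X : Set (EuclideanSpace ℝ (Fin n))) (Y : Set (EuclideanSpace ℝ (Fin m)))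
    (Dy : ℝ) (hDy : 0 < Dy)
    (hXcv : Convex ℝ X)
    (hYne : Y.Nonempty)
    (p : EuclideanSpace ℝ (Fin n) → ℝ) (q : EuclideanSpace ℝ (Fin m) → ℝ)
    (h : EuclideanSpace ℝ (Fin n) → EuclideanSpace ℝ (Fin m) → ℝ)
    (gx : EuclideanSpace ℝ (Fin n) → EuclideanSpace ℝ (Fin m) → EuclideanSpace ℝ (Fin n))
    (gy : EuclideanSpace ℝ (Fin n) → EuclideanSpace ℝ (Fin m) → EuclideanSpace ℝ (Fin m))
    (L : ℝ) (hL : 0 < L)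
    (hgx : ∀ x ∈ X, ∀ y ∈ Y, HasGradientAt (fun x' => h x' y) (gx x y) x)
    (hgy : ∀ x ∈ X, ∀ y ∈ Y, HasGradientAt (fun y' => h x y') (gy x y) y)
    -- L-Lipschitz continuity of ∇h on X×Y (in the Euclidean product norm)
    (hLip : ∀ x ∈ X, ∀ y ∈ Y, ∀ x' ∈ X, ∀ y' ∈ Y,
      ‖gx x y - gx x' y'‖ ^ 2 + ‖gy x y - gy x' y'‖ ^ 2
        ≤ L ^ 2 * (‖x - x'‖ ^ 2 + ‖y - y'‖ ^ 2))
    (hconc : ∀ x ∈ X, ConcaveOn ℝ Y (fun y => h x y))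
    (ε εh : ℝ) (hε : 0 < ε)
    (y0 : EuclideanSpace ℝ (Fin m))
    (xk : EuclideanSpace ℝ (Fin n)) (hxk : xk ∈ X)
    (x1 : EuclideanSpace ℝ (Fin n)) (y1 : EuclideanSpace ℝ (Fin m))
    (hx1 : x1 ∈ X) (hy1 : y1 ∈ Y)
    -- ε̂-primal-dual stationarity of (x^{k+1}, y^{k+1}) for the subproblem:
    -- ∇_x h_k(x,y) = ∇_x h(x,y) + 2L(x − x^k), ∇_y h_k(x,y) = ∇_y h(x,y) − ε/(2D_y)(y − ŷ⁰)
    (s : EuclideanSpace ℝ (Fin n)) (t : EuclideanSpace ℝ (Fin m))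
    (hs : ∀ u ∈ X, p x1 + @inner ℝ _ _ s (u - x1) ≤ p u)
    (ht : ∀ v ∈ Y, q y1 + @inner ℝ _ _ t (v - y1) ≤ q v)
    (hsx : ‖gx x1 y1 + (2 * L) • (x1 - xk) + s‖ ≤ εh)
    (hsy : ‖gy x1 y1 - (ε / (2 * Dy)) • (y1 - y0) - t‖ ≤ εh) :
    sSup ((fun y => h xk y + p xk - q y - ε / (4 * Dy) * ‖y - y0‖ ^ 2) '' Y)
        - sSup ((fun y => h x1 y + p x1 - q y - ε / (4 * Dy) * ‖y - y0‖ ^ 2) '' Y)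
      ≥ L * ‖xk - x1‖ ^ 2 - (L⁻¹ + 4 * Dy ^ 2 * L / ε ^ 2) * εh ^ 2 := by
  set c := ε / (4 * Dy)
  have hc : 0 < c := by positivity
  rw [show ε / (2 * Dy) = 2 * c by ring] at hsy
  have hdual : ∀ x ∈ X, ∀ δ, ‖gy x y1 - (2 * c) • (y1 - y0) - t‖ ≤ δ → ∀ y ∈ Y,
      h x y + p x - q y - c * ‖y - y0‖ ^ 2
        ≤ h x y1 + p x - q y1 - c * ‖y1 - y0‖ ^ 2 + δ ^ 2 / (4 * c) := fun x hx δ hδ y hy => by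
    linarith [(hconc x hx).sub_sub_mul_sq_le hy1 hy (hgy x hx y1 hy1) (ht y hy) hc hδ]
  have hupper := csSup_le (hYne.image _) (forall_mem_image.2 (hdual x1 hx1 εh hsy))
  -- the same bound at `x^k`, with `δ` its actual residual, shows that this supremum is finite
  have hlower := le_csSup ⟨_, forall_mem_image.2 (hdual xk hxk _ le_rfl)⟩ (mem_image_of_mem
    (fun y => h xk y + p xk - q y - c * ‖y - y0‖ ^ 2) hy1)
  have hlipx : ∀ z ∈ X, ‖gx z y1 - gx x1 y1‖ ≤ L * ‖z - x1‖ := fun z hz => by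
    have := hLip z hz y1 hy1 x1 hx1 y1 hy1
    rw [sub_self, norm_zero, zero_pow two_ne_zero, add_zero] at this
    refine (pow_le_pow_iff_left₀ (norm_nonneg _) (by positivity) two_ne_zero).1 ?_
    nlinarith [sq_nonneg ‖gy z y1 - gy x1 y1‖]
  have hprimal := hXcv.mul_sq_sub_le_of_norm_le hx1 hxk (fun z hz => hgx z hz y1 hy1) hlipx
    (hs xk hxk) hL hsx
  have hcoef := sq_div_add_sq_div_le (δ := εh) hL hε hDy
  linarith

/-- Per-iteration descent inequality for the potential
`H*_ε(x) = max_{y∈Y} {h(x,y)+p(x)−q(y) − ε‖y−ŷ⁰‖²/(4D_y)}` at an `ε̂`-primal-dual stationary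
point of the proximal subproblem `min_x max_y {h_k(x,y)+p(x)−q(y)}`. -/
theorem potential_descent {n m : ℕ}
    (X : Set (EuclideanSpace ℝ (Fin n))) (Y : Set (EuclideanSpace ℝ (Fin m)))
    (Dy : ℝ) (hDy : 0 < Dy)
    (hXne : X.Nonempty) (hXcp : IsCompact X) (hXcv : Convex ℝ X)
    (hYne : Y.Nonempty) (hYcp : IsCompact Y) (hYcv : Convex ℝ Y)
    (hdY : ∀ u ∈ Y, ∀ v ∈ Y, ‖u - v‖ ≤ Dy)
    (p : EuclideanSpace ℝ (Fin n) → ℝ) (q : EuclideanSpace ℝ (Fin m) → ℝ)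
    (hpcvx : ConvexOn ℝ X p) (hplsc : LowerSemicontinuousOn p X)
    (hqcvx : ConvexOn ℝ Y q) (hqlsc : LowerSemicontinuousOn q Y)
    (h : EuclideanSpace ℝ (Fin n) → EuclideanSpace ℝ (Fin m) → ℝ)
    (gx : EuclideanSpace ℝ (Fin n) → EuclideanSpace ℝ (Fin m) → EuclideanSpace ℝ (Fin n))
    (gy : EuclideanSpace ℝ (Fin n) → EuclideanSpace ℝ (Fin m) → EuclideanSpace ℝ (Fin m))
    (L : ℝ) (hL : 0 < L)
    (hgx : ∀ x ∈ X, ∀ y ∈ Y, HasGradientAt (fun x' => h x' y) (gx x y) x)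
    (hgy : ∀ x ∈ X, ∀ y ∈ Y, HasGradientAt (fun y' => h x y') (gy x y) y)
    -- L-Lipschitz continuity of ∇h on X×Y (in the Euclidean product norm)
    (hLip : ∀ x ∈ X, ∀ y ∈ Y, ∀ x' ∈ X, ∀ y' ∈ Y,
      ‖gx x y - gx x' y'‖ ^ 2 + ‖gy x y - gy x' y'‖ ^ 2
        ≤ L ^ 2 * (‖x - x'‖ ^ 2 + ‖y - y'‖ ^ 2))
    (hconc : ∀ x ∈ X, ConcaveOn ℝ Y (fun y => h x y))
    (ε εh : ℝ) (hε : 0 < ε) (hεh : 0 < εh)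
    (y0 : EuclideanSpace ℝ (Fin m)) (hy0 : y0 ∈ Y)
    (xk : EuclideanSpace ℝ (Fin n)) (hxk : xk ∈ X)
    (x1 : EuclideanSpace ℝ (Fin n)) (y1 : EuclideanSpace ℝ (Fin m))
    (hx1 : x1 ∈ X) (hy1 : y1 ∈ Y)
    -- ε̂-primal-dual stationarity of (x^{k+1}, y^{k+1}) for the subproblem:
    -- ∇_x h_k(x,y) = ∇_x h(x,y) + 2L(x − x^k), ∇_y h_k(x,y) = ∇_y h(x,y) − ε/(2D_y)(y − ŷ⁰)
    (s : EuclideanSpace ℝ (Fin n)) (t : EuclideanSpace ℝ (Fin m))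
    (hs : ∀ u ∈ X, p x1 + @inner ℝ _ _ s (u - x1) ≤ p u)
    (ht : ∀ v ∈ Y, q y1 + @inner ℝ _ _ t (v - y1) ≤ q v)
    (hsx : ‖gx x1 y1 + (2 * L) • (x1 - xk) + s‖ ≤ εh)
    (hsy : ‖gy x1 y1 - (ε / (2 * Dy)) • (y1 - y0) - t‖ ≤ εh) :
    sSup ((fun y => h xk y + p xk - q y - ε / (4 * Dy) * ‖y - y0‖ ^ 2) '' Y)
        - sSup ((fun y => h x1 y + p x1 - q y - ε / (4 * Dy) * ‖y - y0‖ ^ 2) '' Y)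
      ≥ L * ‖xk - x1‖ ^ 2 - (L⁻¹ + 4 * Dy ^ 2 * L / ε ^ 2) * εh ^ 2 :=
  potential_descent_general X Y Dy hDy hXcv hYne p q h gx gy L hL hgx hgy hLip hconc ε εh hε y0 xk
    hxk x1 y1 hx1 hy1 s t hs ht hsx hsy
end

section
/- Let X ⊆ ℝ^n and Y ⊆ ℝ^m be nonempty compact convex sets with Y of diameter at most D_y. Let F : X×Y → ℝ be L_F-Lipschitz continuous on X×Y with F(x,·) concave on Y for each x ∈ X, and let d : X×Y → ℝ^{m̃} be L_d-Lipschitz continuous on X×Y with each component d_i(x,·) convex on Y for each x ∈ X. Suppose there exists δ_d > 0 such that for every x ∈ X there is ŷ_x ∈ Y with d_i(x,ŷ_x) ≤ −δ_d for all i. Define f*(x) = max{F(x,y) : y ∈ Y, d(x,y) ≤ 0 componentwise}. Then f* is Lipschitz continuous on X, and f*_low := inf_{x∈X} f*(x) is finite. -/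
private lemma sqrt_sq_add_sq_le {a b : ℝ} (ha : 0 ≤ a) (hb : 0 ≤ b) :
    Real.sqrt (a ^ 2 + b ^ 2) ≤ a + b := by
  rw [show a + b = Real.sqrt ((a + b) ^ 2) by rw [Real.sqrt_sq (by positivity)]]
  apply Real.sqrt_le_sqrt; nlinarith

private lemma abs_apply_le_norm {mt : ℕ} (u : EuclideanSpace ℝ (Fin mt)) (i : Fin mt) :
    |u i| ≤ ‖u‖ := by
  rw [EuclideanSpace.norm_eq, ← Real.sqrt_sq_eq_abs]
  apply Real.sqrt_le_sqrt
  calc (u i) ^ 2 = ‖u i‖ ^ 2 := by rw [Real.norm_eq_abs, sq_abs]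
  _ ≤ ∑ j, ‖u j‖ ^ 2 := Finset.single_le_sum (f := fun j => ‖u j‖ ^ 2)
      (fun j _ => sq_nonneg _) (Finset.mem_univ i)

/-- Lipschitz continuity and boundedness below of the value function
`f*(x) = max{F(x,y) : y ∈ Y, d(x,y) ≤ 0}` of the inner maximization in the constrained
minimax problem, under a uniform Slater condition. -/
theorem value_function_lipschitz {n m mt : ℕ}
    (X : Set (EuclideanSpace ℝ (Fin n))) (Y : Set (EuclideanSpace ℝ (Fin m)))
    (Dy : ℝ)
    (hXne : X.Nonempty) (hXcp : IsCompact X) (hXcv : Convex ℝ X)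
    (hYne : Y.Nonempty) (hYcp : IsCompact Y) (hYcv : Convex ℝ Y)
    (hdY : ∀ u ∈ Y, ∀ v ∈ Y, ‖u - v‖ ≤ Dy)
    (F : EuclideanSpace ℝ (Fin n) → EuclideanSpace ℝ (Fin m) → ℝ) (LF : ℝ)
    -- F is L_F-Lipschitz on X×Y (Euclidean product norm)
    (hFLip : ∀ x ∈ X, ∀ y ∈ Y, ∀ x' ∈ X, ∀ y' ∈ Y,
      |F x y - F x' y'| ≤ LF * Real.sqrt (‖x - x'‖ ^ 2 + ‖y - y'‖ ^ 2))
    (hFconc : ∀ x ∈ X, ConcaveOn ℝ Y (F x))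
    (d : EuclideanSpace ℝ (Fin n) → EuclideanSpace ℝ (Fin m) → EuclideanSpace ℝ (Fin mt))
    (Ld : ℝ)
    (hdLip : ∀ x ∈ X, ∀ y ∈ Y, ∀ x' ∈ X, ∀ y' ∈ Y,
      ‖d x y - d x' y'‖ ≤ Ld * Real.sqrt (‖x - x'‖ ^ 2 + ‖y - y'‖ ^ 2))
    (hdconv : ∀ x ∈ X, ∀ i, ConvexOn ℝ Y (fun y => d x y i))
    (δd : ℝ) (hδd : 0 < δd)
    (hslater : ∀ x ∈ X, ∃ y ∈ Y, ∀ i, d x y i ≤ -δd) :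
    let fstar : EuclideanSpace ℝ (Fin n) → ℝ :=
      fun x => sSup ((fun y => F x y) '' {y ∈ Y | ∀ i, d x y i ≤ 0})
    (∃ K : NNReal, LipschitzOnWith K fstar X) ∧ BddBelow (fstar '' X) := by
  intro fstar
  obtain ⟨y₀, hy₀⟩ := hYne
  set LF' := max LF 0 with hLF'def
  set Ld' := max Ld 0 with hLd'def
  have hLF0 : (0:ℝ) ≤ LF' := le_max_right _ _
  have hLd0 : (0:ℝ) ≤ Ld' := le_max_right _ _
  have hDy0 : (0:ℝ) ≤ Dy := le_trans (norm_nonneg (y₀ - y₀)) (hdY y₀ hy₀ y₀ hy₀)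
  -- strengthened Lipschitz bounds with nonnegative constants and sum norm
  have hFLip' : ∀ x ∈ X, ∀ y ∈ Y, ∀ x' ∈ X, ∀ y' ∈ Y,
      |F x y - F x' y'| ≤ LF' * (‖x - x'‖ + ‖y - y'‖) := by
    intro x hx y hy x' hx' y' hy'
    calc |F x y - F x' y'| ≤ LF * Real.sqrt (‖x - x'‖ ^ 2 + ‖y - y'‖ ^ 2) :=
          hFLip x hx y hy x' hx' y' hy'
      _ ≤ LF' * Real.sqrt (‖x - x'‖ ^ 2 + ‖y - y'‖ ^ 2) :=
          mul_le_mul_of_nonneg_right (le_max_left _ _) (Real.sqrt_nonneg _)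
      _ ≤ LF' * (‖x - x'‖ + ‖y - y'‖) :=
          mul_le_mul_of_nonneg_left
            (sqrt_sq_add_sq_le (norm_nonneg _) (norm_nonneg _)) hLF0
  have hdLip' : ∀ x ∈ X, ∀ y ∈ Y, ∀ x' ∈ X, ∀ y' ∈ Y,
      ‖d x y - d x' y'‖ ≤ Ld' * (‖x - x'‖ + ‖y - y'‖) := by
    intro x hx y hy x' hx' y' hy'
    calc ‖d x y - d x' y'‖ ≤ Ld * Real.sqrt (‖x - x'‖ ^ 2 + ‖y - y'‖ ^ 2) :=
          hdLip x hx y hy x' hx' y' hy'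
      _ ≤ Ld' * Real.sqrt (‖x - x'‖ ^ 2 + ‖y - y'‖ ^ 2) :=
          mul_le_mul_of_nonneg_right (le_max_left _ _) (Real.sqrt_nonneg _)
      _ ≤ Ld' * (‖x - x'‖ + ‖y - y'‖) :=
          mul_le_mul_of_nonneg_left
            (sqrt_sq_add_sq_le (norm_nonneg _) (norm_nonneg _)) hLd0
  -- feasible set
  set S : EuclideanSpace ℝ (Fin n) → Set (EuclideanSpace ℝ (Fin m)) :=
    fun x => {y ∈ Y | ∀ i, d x y i ≤ 0} with hSdef
  have hSsub : ∀ x, S x ⊆ Y := fun x y hy => hy.1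
  have hSne : ∀ x ∈ X, (S x).Nonempty := by
    intro x hx
    obtain ⟨y, hyY, hyd⟩ := hslater x hx
    exact ⟨y, hyY, fun i => le_trans (hyd i) (by linarith)⟩
  have hcontF : ∀ x ∈ X, ContinuousOn (F x) Y := by
    intro x hx
    have : LipschitzOnWith (Real.toNNReal LF') (F x) Y := by
      rw [lipschitzOnWith_iff_dist_le_mul]
      intro y hy y' hy'
      rw [Real.dist_eq, dist_eq_norm, Real.coe_toNNReal _ hLF0]
      have := hFLip' x hx y hy x hx y' hy'
      simpa using this
    exact this.continuousOn
  have hcontd : ∀ x ∈ X, ContinuousOn (d x) Y := by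
    intro x hx
    have : LipschitzOnWith (Real.toNNReal Ld') (d x) Y := by
      rw [lipschitzOnWith_iff_dist_le_mul]
      intro y hy y' hy'
      rw [dist_eq_norm, dist_eq_norm, Real.coe_toNNReal _ hLd0]
      have := hdLip' x hx y hy x hx y' hy'
      simpa using this
    exact this.continuousOn
  have hScp : ∀ x ∈ X, IsCompact (S x) := by
    intro x hx
    have hC : IsClosed {u : EuclideanSpace ℝ (Fin mt) | ∀ i, u i ≤ 0} := by
      have : {u : EuclideanSpace ℝ (Fin mt) | ∀ i, u i ≤ 0}
          = ⋂ i, (fun u : EuclideanSpace ℝ (Fin mt) => u i) ⁻¹' Set.Iic 0 := by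
        ext u; simp [Set.mem_iInter]
      rw [this]
      refine isClosed_iInter fun i => IsClosed.preimage ?_ isClosed_Iic
      exact (EuclideanSpace.proj i).continuous
    have hSeq : S x = Y ∩ (d x) ⁻¹' {u | ∀ i, u i ≤ 0} := by
      ext y; simp [hSdef, Set.mem_inter_iff]
    have : IsClosed (S x) := by
      rw [hSeq]
      exact (hcontd x hx).preimage_isClosed_of_isClosed hYcp.isClosed hC
    exact hYcp.of_isClosed_subset this (hSsub x)
  have himg : ∀ x ∈ X, IsCompact ((fun y => F x y) '' S x) := by
    intro x hx
    exact (hScp x hx).image_of_continuousOn ((hcontF x hx).mono (hSsub x))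
  have hmem : ∀ x ∈ X, fstar x ∈ (fun y => F x y) '' S x := by
    intro x hx
    exact (himg x hx).sSup_mem ((hSne x hx).image _)
  have hub : ∀ x ∈ X, ∀ y ∈ S x, F x y ≤ fstar x := by
    intro x hx y hy
    exact le_csSup (himg x hx).bddAbove (Set.mem_image_of_mem _ hy)
  -- key one-sided inequality
  set K0 : ℝ := LF' * (1 + Ld' * Dy / δd) with hK0def
  have hK00 : 0 ≤ K0 := by positivity
  have key : ∀ x ∈ X, ∀ x' ∈ X, fstar x - fstar x' ≤ K0 * ‖x - x'‖ := by
    intro x hx x' hx'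
    obtain ⟨y, hyS, hyF⟩ := hmem x hx
    obtain ⟨yh, hyhY, hyhd⟩ := hslater x' hx'
    have hyY : y ∈ Y := hyS.1
    set r : ℝ := ‖x - x'‖ with hrdef
    have hr0 : 0 ≤ r := norm_nonneg _
    have hden : (0:ℝ) < δd + Ld' * r := by positivity
    set t : ℝ := Ld' * r / (δd + Ld' * r) with htdef
    have ht0 : 0 ≤ t := by positivity
    have ht1 : t ≤ 1 := by
      rw [htdef, div_le_one hden]; nlinarith
    set yt := (1 - t) • y + t • yh with hytdef
    have hytY : yt ∈ Y := hYcv hyY hyhY (by linarith) ht0 (by ring)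
    have hytS : yt ∈ S x' := by
      refine ⟨hytY, fun i => ?_⟩
      have hcv := (hdconv x' hx' i).2 hyY hyhY (by linarith : (0:ℝ) ≤ 1 - t) ht0 (by ring)
      simp only [smul_eq_mul] at hcv
      have h2 : d x' y i ≤ Ld' * r := by
        have habs : |d x' y i - d x y i| ≤ ‖d x' y - d x y‖ := by
          have := abs_apply_le_norm (d x' y - d x y) i
          simpa using this
        have hlip := hdLip' x' hx' y hyY x hx y hyY
        simp only [sub_self, norm_zero, add_zero] at hlip
        have hxx : ‖x' - x‖ = r := by rw [hrdef, norm_sub_rev]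
        have hd0 : d x y i ≤ 0 := hyS.2 i
        have := abs_le.1 habs
        nlinarith [hlip, hxx.le, hxx.ge]
      have h3 : d x' yh i ≤ -δd := hyhd i
      have hzero : (1 - t) * (Ld' * r) + t * (-δd) = 0 := by
        rw [htdef]; field_simp; ring
      calc d x' yt i ≤ (1 - t) * d x' y i + t * d x' yh i := hcv
        _ ≤ (1 - t) * (Ld' * r) + t * (-δd) := by
            apply add_le_add
            · exact mul_le_mul_of_nonneg_left h2 (by linarith)
            · exact mul_le_mul_of_nonneg_left h3 ht0
        _ = 0 := hzero
    have hnyt : ‖yt - y‖ ≤ t * Dy := by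
      have : yt - y = t • (yh - y) := by
        rw [hytdef]; module
      rw [this, norm_smul, Real.norm_eq_abs, abs_of_nonneg ht0]
      exact mul_le_mul_of_nonneg_left (hdY yh hyhY y hyY) ht0
    have htle : t ≤ Ld' * r / δd := by
      rw [htdef, div_le_div_iff₀ hden hδd]; nlinarith [sq_nonneg (Ld' * r)]
    have hFb := hFLip' x hx y hyY x' hx' yt hytY
    have h1 : F x y - F x' yt ≤ LF' * (r + ‖yt - y‖) := by
      have h := (abs_le.1 hFb).2
      rwa [← hrdef, norm_sub_rev y yt] at h
    have h2 : F x' yt ≤ fstar x' := hub x' hx' yt hytS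
    have htd : t * Dy ≤ Ld' * r / δd * Dy :=
      mul_le_mul_of_nonneg_right htle hDy0
    calc fstar x - fstar x' ≤ F x y - F x' yt := by rw [← hyF]; linarith
      _ ≤ LF' * (r + ‖yt - y‖) := h1
      _ ≤ LF' * (r + Ld' * r / δd * Dy) := by
          apply mul_le_mul_of_nonneg_left _ hLF0
          linarith [hnyt, htd]
      _ = K0 * r := by rw [hK0def]; field_simp
  have hLip : LipschitzOnWith (Real.toNNReal K0) fstar X := by
    rw [lipschitzOnWith_iff_dist_le_mul]
    intro x hx x' hx'
    rw [Real.dist_eq, dist_eq_norm, Real.coe_toNNReal _ hK00]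
    rw [abs_le]
    constructor
    · have := key x' hx' x hx
      have : fstar x' - fstar x ≤ K0 * ‖x - x'‖ := by
        rwa [norm_sub_rev] at this
      linarith
    · exact key x hx x' hx'
  refine ⟨⟨Real.toNNReal K0, hLip⟩, ?_⟩
  exact (hXcp.image_of_continuousOn hLip.continuousOn).bddBelow
end

section
/- Let Y ⊆ ℝ^m be a nonempty convex set of diameter at most D_y, let x ∈ ℝ^n be fixed, let F(x,·) : Y → ℝ be concave on Y, and let d(x,·) : Y → ℝ^{m̃} have each component convex on Y. Fix λ ∈ ℝ^{m̃} with λ ≥ 0 componentwise, ρ > 0, ε > 0 and y' ∈ Y, and set λ' = [λ + ρ d(x,y')]_+ and L_y(x,y,λ;ρ) = F(x,y) − (‖[λ + ρ d(x,y)]_+‖² − ‖λ‖²)/(2ρ). Suppose u ∈ ℝ^m with ‖u‖ ≤ ε is a supergradient of the concave function y ↦ L_y(x,y,λ;ρ) at y', i.e. L_y(x,y,λ;ρ) ≤ L_y(x,y',λ;ρ) + ⟨u, y − y'⟩ for all y ∈ Y. Then sup{F(x,y) : y ∈ Y, d(x,y) ≤ 0 componentwise} ≤ F(x,y') − (‖λ'‖²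 − ‖λ‖²)/(2ρ) + D_y·ε. -/
/-- Componentwise positive part `[v]₊` of a vector. -/
noncomputable def posPart {k : ℕ} (v : EuclideanSpace ℝ (Fin k)) : EuclideanSpace ℝ (Fin k) :=
  WithLp.toLp 2 (fun i => max (v i) 0)

/-!
At a feasible `y` (`d(x,y) ≤ 0`) we have `0 ≤ [λ + ρ d(x,y)]₊ ≤ λ` componentwise, so the penalty
term of `L_y` is nonpositive there and `F(x,y) ≤ L_y(x,y,λ;ρ)`. The supergradient inequality
bounds this by `L_y(x,y',λ;ρ) + ⟨u, y - y'⟩`, and Cauchy–Schwarz gives `⟨u, y - y'⟩ ≤ ε D_y`.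
-/

theorem norm_posPart_le_of_le {k : ℕ} {v a : EuclideanSpace ℝ (Fin k)}
    (ha : ∀ i, 0 ≤ a i) (hva : ∀ i, v i ≤ a i) : ‖posPart v‖ ≤ ‖a‖ := by
  rw [EuclideanSpace.norm_eq, EuclideanSpace.norm_eq]
  refine Real.sqrt_le_sqrt (Finset.sum_le_sum fun i _ => ?_)
  have hcoord : posPart v i = max (v i) 0 := rfl
  rw [hcoord, Real.norm_eq_abs, Real.norm_eq_abs, sq_abs, sq_abs]
  exact pow_le_pow_left₀ (le_max_right _ _) (max_le (hva i) (ha i)) 2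

theorem penalty_nonpos_of_nonpos {k : ℕ} {lam v : EuclideanSpace ℝ (Fin k)} {ρ : ℝ}
    (hlam : ∀ i, 0 ≤ lam i) (hρ : 0 < ρ) (hv : ∀ i, v i ≤ 0) :
    (‖posPart (lam + ρ • v)‖ ^ 2 - ‖lam‖ ^ 2) / (2 * ρ) ≤ 0 := by
  have hle : ‖posPart (lam + ρ • v)‖ ≤ ‖lam‖ :=
    norm_posPart_le_of_le hlam fun i => by
      simpa using mul_nonpos_of_nonneg_of_nonpos hρ.le (hv i)
  have hsq : ‖posPart (lam + ρ • v)‖ ^ 2 ≤ ‖lam‖ ^ 2 := by gcongr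
  exact div_nonpos_of_nonpos_of_nonneg (by linarith) (by positivity)

theorem real_inner_le_mul_of_norm_le {E : Type*} [NormedAddCommGroup E] [InnerProductSpace ℝ E]
    {u w : E} {ε D : ℝ} (hu : ‖u‖ ≤ ε) (hw : ‖w‖ ≤ D) : inner ℝ u w ≤ D * ε :=
  calc inner ℝ u w ≤ ‖u‖ * ‖w‖ := real_inner_le_norm u w
    _ ≤ ε * D := mul_le_mul hu hw (norm_nonneg w) ((norm_nonneg u).trans hu)
    _ = D * ε := mul_comm ε D

theorem dual_growth_control_general {n m mt : ℕ}
    (Y : Set (EuclideanSpace ℝ (Fin m)))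
    (Dy : ℝ) (hdY : ∀ u ∈ Y, ∀ v ∈ Y, ‖u - v‖ ≤ Dy)
    (x : EuclideanSpace ℝ (Fin n))
    (F : EuclideanSpace ℝ (Fin n) → EuclideanSpace ℝ (Fin m) → ℝ)
    (d : EuclideanSpace ℝ (Fin n) → EuclideanSpace ℝ (Fin m) → EuclideanSpace ℝ (Fin mt))
    (lam : EuclideanSpace ℝ (Fin mt)) (hlam : ∀ i, 0 ≤ lam i)
    (ρ ε : ℝ) (hρ : 0 < ρ)
    (y' : EuclideanSpace ℝ (Fin m)) (hy' : y' ∈ Y)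
    (u : EuclideanSpace ℝ (Fin m)) (hu : ‖u‖ ≤ ε)
    -- u is a supergradient of y ↦ L_y(x,y,λ;ρ) at y' on Y
    (hsuper : ∀ y ∈ Y,
      F x y - (‖posPart (lam + ρ • d x y)‖ ^ 2 - ‖lam‖ ^ 2) / (2 * ρ)
        ≤ F x y' - (‖posPart (lam + ρ • d x y')‖ ^ 2 - ‖lam‖ ^ 2) / (2 * ρ)
          + @inner ℝ _ _ u (y - y')) :
    (⨆ y ∈ {y ∈ Y | ∀ i, d x y i ≤ 0}, ((F x y : ℝ) : EReal))
      ≤ ((F x y' - (‖posPart (lam + ρ • d x y')‖ ^ 2 - ‖lam‖ ^ 2) / (2 * ρ)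
          + Dy * ε : ℝ) : EReal) := by
  refine iSup₂_le fun y ⟨hyY, hyd⟩ => EReal.coe_le_coe_iff.mpr ?_
  have hpenalty := penalty_nonpos_of_nonpos hlam hρ hyd
  have hinner := real_inner_le_mul_of_norm_le hu (hdY y hyY y' hy')
  linarith [hsuper y hyY]

/-- Per-iteration inequality controlling the growth of the dual
multipliers: if `u` with `‖u‖ ≤ ε` is a supergradient on `Y` of the concave augmented
Lagrangian `y ↦ L_y(x,y,λ;ρ)` at `y'`, and `λ' = [λ + ρ d(x,y')]₊`, then the constrained
maximal value is at most `F(x,y') − (‖λ'‖² − ‖λ‖²)/(2ρ) + D_y ε`. -/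
theorem dual_growth_control {n m mt : ℕ}
    (Y : Set (EuclideanSpace ℝ (Fin m))) (hYne : Y.Nonempty) (hYcv : Convex ℝ Y)
    (Dy : ℝ) (hdY : ∀ u ∈ Y, ∀ v ∈ Y, ‖u - v‖ ≤ Dy)
    (x : EuclideanSpace ℝ (Fin n))
    (F : EuclideanSpace ℝ (Fin n) → EuclideanSpace ℝ (Fin m) → ℝ)
    (hFconc : ConcaveOn ℝ Y (F x))
    (d : EuclideanSpace ℝ (Fin n) → EuclideanSpace ℝ (Fin m) → EuclideanSpace ℝ (Fin mt))
    (hdconv : ∀ i, ConvexOn ℝ Y (fun y => d x y i))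
    (lam : EuclideanSpace ℝ (Fin mt)) (hlam : ∀ i, 0 ≤ lam i)
    (ρ ε : ℝ) (hρ : 0 < ρ) (hε : 0 < ε)
    (y' : EuclideanSpace ℝ (Fin m)) (hy' : y' ∈ Y)
    (u : EuclideanSpace ℝ (Fin m)) (hu : ‖u‖ ≤ ε)
    -- u is a supergradient of y ↦ L_y(x,y,λ;ρ) at y' on Y
    (hsuper : ∀ y ∈ Y,
      F x y - (‖posPart (lam + ρ • d x y)‖ ^ 2 - ‖lam‖ ^ 2) / (2 * ρ)
        ≤ F x y' - (‖posPart (lam + ρ • d x y')‖ ^ 2 - ‖lam‖ ^ 2) / (2 * ρ)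
          + @inner ℝ _ _ u (y - y')) :
    (⨆ y ∈ {y ∈ Y | ∀ i, d x y i ≤ 0}, ((F x y : ℝ) : EReal))
      ≤ ((F x y' - (‖posPart (lam + ρ • d x y')‖ ^ 2 - ‖lam‖ ^ 2) / (2 * ρ)
          + Dy * ε : ℝ) : EReal) :=
  dual_growth_control_general Y Dy hdY x F d lam hlam ρ ε hρ y' hy' u hu hsuper
end

section
/- Let X ⊆ ℝ^n and Y ⊆ ℝ^m be nonempty compact convex sets with Y of diameter at most D_y. Let F : X×Y → ℝ be continuous with F(x,·) concave on Y for each x ∈ X, and let d : X×Y → ℝ^{m̃} be continuous with each component d_i(x,·) convex on Y for each x ∈ X; assume that for every x ∈ X there exists y ∈ Y with d(x,y) ≤ 0 componentwise. Define f*(x) = max{F(x,y) : y ∈ Y, d(x,y) ≤ 0}, F_hi = max_{X×Y} F, f*_low = inf_{x∈X} f*(x), and L_y(x,y,λ;ρ) = F(x,y) − (‖[λ + ρ d(x,y)]_+‖² − ‖λ‖²)/(2ρ). Fix τ ∈ (0,1), ε₀ ∈ (0,1], and set ε_t = ε₀τ^t, ρ_t = ε_t^{-1}. Suppose λ⁰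 ∈ ℝ^{m̃} with λ⁰ ≥ 0, and sequences (x^{t+1}, y^{t+1}) ∈ X×Y and λ^{t+1} = [λ^t + ρ_t d(x^{t+1},y^{t+1})]_+ for t ≥ 0 are such that for each t there exists u_t ∈ ℝ^m with ‖u_t‖ ≤ ε_t that is a supergradient of y ↦ L_y(x^{t+1},y,λ^t;ρ_t) at y^{t+1} on Y. Then for every k ≥ 0: ρ_k^{-1}‖λ^k‖² ≤ ‖λ⁰‖² + 2(F_hi − f*_low + D_y·ε₀)/(1−τ). -/
open Function
open scoped RealInnerProductSpace

namespace posPart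

variable {k : ℕ}

theorem nonneg (v : EuclideanSpace ℝ (Fin k)) (i : Fin k) : 0 ≤ posPart v i :=
  le_max_right _ _

theorem norm_sq_add_smul_le {lam v : EuclideanSpace ℝ (Fin k)} {ρ : ℝ}
    (hlam : ∀ i, 0 ≤ lam i) (hρ : 0 ≤ ρ) (hv : ∀ i, v i ≤ 0) :
    ‖posPart (lam + ρ • v)‖ ^ 2 ≤ ‖lam‖ ^ 2 := by
  simp only [EuclideanSpace.real_norm_sq_eq]
  refine Finset.sum_le_sum fun i _ => pow_le_pow_left₀ (nonneg _ i) ?_ 2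
  exact max_le (by simpa using mul_nonpos_of_nonneg_of_nonpos hρ (hv i)) (hlam i)

end posPart

noncomputable def augLagrangian {E : Type*} {k : ℕ} (F : E → ℝ)
    (d : E → EuclideanSpace ℝ (Fin k)) (lam : EuclideanSpace ℝ (Fin k)) (ρ : ℝ) (y : E) : ℝ :=
  F y - (‖posPart (lam + ρ • d y)‖ ^ 2 - ‖lam‖ ^ 2) / (2 * ρ)

theorem mul_sq_norm_update_le_of_augLagrangian_le {E : Type*} [NormedAddCommGroup E]
    [InnerProductSpace ℝ E] {k : ℕ} {F : E → ℝ} {d : E → EuclideanSpace ℝ (Fin k)}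
    {lam : EuclideanSpace ℝ (Fin k)} {ε : ℝ} {u y z : E} (hlam : ∀ i, 0 ≤ lam i) (hε : 0 < ε)
    (hz : ∀ i, d z i ≤ 0)
    (hsg : augLagrangian F d lam ε⁻¹ z ≤ augLagrangian F d lam ε⁻¹ y + ⟪u, z - y⟫) :
    ε * ‖posPart (lam + ε⁻¹ • d y)‖ ^ 2
      ≤ ε * ‖lam‖ ^ 2 + 2 * (F y - F z + ⟪u, z - y⟫) := by
  have hpenalty := posPart.norm_sq_add_smul_le hlam (inv_nonneg.2 hε.le) hz
  simp only [augLagrangian, div_eq_mul_inv, mul_inv, inv_inv] at hsg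
  nlinarith

theorem sInf_sSup_le_of_forall_le {α β : Type*} {X : Set α} {Y : Set β} {F : α → β → ℝ}
    {S : α → Set β} (hSY : ∀ x ∈ X, S x ⊆ Y) (hS : ∀ x ∈ X, (S x).Nonempty)
    (hF : Bornology.IsBounded (uncurry F '' X ×ˢ Y)) {x : α} (hx : x ∈ X) {r : ℝ}
    (hr : ∀ y ∈ S x, F x y ≤ r) :
    sInf ((fun x' => sSup ((fun y' => F x' y') '' S x')) '' X) ≤ r := by
  have hbdd : ∀ x' ∈ X, BddAbove ((fun y' => F x' y') '' S x') := fun x' hx' =>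
    hF.bddAbove.mono <| by rintro _ ⟨y', hy', rfl⟩; exact ⟨(x', y'), ⟨hx', hSY x' hx' hy'⟩, rfl⟩
  obtain ⟨m, hm⟩ := hF.bddBelow
  have hlow : BddBelow ((fun x' => sSup ((fun y' => F x' y') '' S x')) '' X) := by
    refine ⟨m, ?_⟩
    rintro _ ⟨x', hx', rfl⟩
    obtain ⟨y', hy'⟩ := hS x' hx'
    exact (hm ⟨(x', y'), ⟨hx', hSY x' hx' hy'⟩, rfl⟩).trans
      (le_csSup (hbdd x' hx') ⟨y', hy', rfl⟩)
  calc _ ≤ sSup ((fun y' => F x y') '' S x) := csInf_le hlow ⟨x, hx, rfl⟩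
    _ ≤ r := csSup_le ((hS x hx).image _) (by rintro _ ⟨y', hy', rfl⟩; exact hr y' hy')

theorem le_add_div_one_sub_of_le_mul_add {b : ℕ → ℝ} {τ c : ℝ} (hτ0 : 0 ≤ τ) (hτ1 : τ < 1)
    (hb0 : 0 ≤ b 0) (hc : 0 ≤ c) (hb : ∀ k, b (k + 1) ≤ τ * b k + c) (k : ℕ) :
    b k ≤ b 0 + c / (1 - τ) := by
  have h1τ : 0 < 1 - τ := sub_pos.2 hτ1
  induction k with
  | zero => exact le_add_of_nonneg_right (div_nonneg hc h1τ.le)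
  | succ k ih =>
    have key : τ * (c / (1 - τ)) + c = c / (1 - τ) := by field_simp; ring
    nlinarith [hb k, mul_le_mul_of_nonneg_left ih hτ0]

/-- `F_hi − f*_low` in the notation of the paper. -/
noncomputable def valueGap {α β : Type*} {k : ℕ} (F : α → β → ℝ)
    (d : α → β → EuclideanSpace ℝ (Fin k)) (X : Set α) (Y : Set β) : ℝ :=
  sSup (uncurry F '' X ×ˢ Y)
    - sInf ((fun x => sSup ((fun y => F x y) '' {y ∈ Y | ∀ i, d x y i ≤ 0})) '' X)

theorem valueGap_nonneg {α β : Type*} {k : ℕ} {X : Set α} {Y : Set β} {F : α → β → ℝ}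
    {d : α → β → EuclideanSpace ℝ (Fin k)} (hF : Bornology.IsBounded (uncurry F '' X ×ˢ Y))
    (hfeas : ∀ x ∈ X, ∃ y ∈ Y, ∀ i, d x y i ≤ 0) (hX : X.Nonempty) : 0 ≤ valueGap F d X Y := by
  obtain ⟨x, hx⟩ := hX
  refine sub_nonneg.2 <| sInf_sSup_le_of_forall_le (fun _ _ => Set.sep_subset _ _) hfeas hF hx
    fun y hy => le_csSup hF.bddAbove ⟨(x, y), ⟨hx, hy.1⟩, rfl⟩

theorem mul_sq_norm_multiplier_update_le {α E : Type*} [NormedAddCommGroup E]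
    [InnerProductSpace ℝ E] {k : ℕ} {X : Set α} {Y : Set E} {F : α → E → ℝ}
    {d : α → E → EuclideanSpace ℝ (Fin k)} (hF : Bornology.IsBounded (uncurry F '' X ×ˢ Y))
    (hfeas : ∀ x ∈ X, ∃ y ∈ Y, ∀ i, d x y i ≤ 0) {D : ℝ} (hD : ∀ u ∈ Y, ∀ v ∈ Y, ‖u - v‖ ≤ D)
    {x : α} {y u : E} {lam : EuclideanSpace ℝ (Fin k)} {ε δ : ℝ} (hx : x ∈ X) (hy : y ∈ Y)
    (hlam : ∀ i, 0 ≤ lam i) (hε : 0 < ε) (hu : ‖u‖ ≤ δ)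
    (hsg : ∀ z ∈ Y, augLagrangian (F x) (d x) lam ε⁻¹ z
      ≤ augLagrangian (F x) (d x) lam ε⁻¹ y + ⟪u, z - y⟫) :
    ε * ‖posPart (lam + ε⁻¹ • d x y)‖ ^ 2 ≤ ε * ‖lam‖ ^ 2 + 2 * (valueGap F d X Y + D * δ) := by
  suffices sInf ((fun x => sSup ((fun y => F x y) '' {y ∈ Y | ∀ i, d x y i ≤ 0})) '' X)
      ≤ sSup (uncurry F '' X ×ˢ Y) + D * δ
        - (ε * ‖posPart (lam + ε⁻¹ • d x y)‖ ^ 2 - ε * ‖lam‖ ^ 2) / 2 by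
    unfold valueGap; linarith
  refine sInf_sSup_le_of_forall_le (fun _ _ => Set.sep_subset _ _) hfeas hF hx ?_
  rintro z ⟨hzY, hz⟩
  have hinner : ⟪u, z - y⟫ ≤ D * δ :=
    (real_inner_le_norm _ _).trans <| by
      nlinarith [hD _ hzY _ hy, norm_nonneg u, norm_nonneg (z - y)]
  have hFy : F x y ≤ sSup (uncurry F '' X ×ˢ Y) := le_csSup hF.bddAbove ⟨(x, y), ⟨hx, hy⟩, rfl⟩
  linarith [mul_sq_norm_update_le_of_augLagrangian_le hlam hε hz (hsg z hzY)]

theorem multiplier_growth_bound_general {n m mt : ℕ}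
    (X : Set (EuclideanSpace ℝ (Fin n))) (Y : Set (EuclideanSpace ℝ (Fin m)))
    (Dy : ℝ)
    (hXcp : IsCompact X) (hYcp : IsCompact Y)
    (hdY : ∀ u ∈ Y, ∀ v ∈ Y, ‖u - v‖ ≤ Dy)
    (F : EuclideanSpace ℝ (Fin n) → EuclideanSpace ℝ (Fin m) → ℝ)
    (hFcont : ContinuousOn
      (fun u : (EuclideanSpace ℝ (Fin n)) × (EuclideanSpace ℝ (Fin m)) => F u.1 u.2) (X ×ˢ Y))
    (d : EuclideanSpace ℝ (Fin n) → EuclideanSpace ℝ (Fin m) → EuclideanSpace ℝ (Fin mt))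
    (hfeas : ∀ x ∈ X, ∃ y ∈ Y, ∀ i, d x y i ≤ 0)
    (τ ε0 : ℝ) (hτ0 : 0 < τ) (hτ1 : τ < 1) (hε0 : 0 < ε0) (hε01 : ε0 ≤ 1)
    (x : ℕ → EuclideanSpace ℝ (Fin n)) (y : ℕ → EuclideanSpace ℝ (Fin m))
    (lam : ℕ → EuclideanSpace ℝ (Fin mt))
    (hmem : ∀ t : ℕ, x (t+1) ∈ X ∧ y (t+1) ∈ Y)
    (hlam0 : ∀ i, 0 ≤ lam 0 i)
    -- λ^{t+1} = [λ^t + ρ_t d(x^{t+1}, y^{t+1})]₊ with ρ_t = (ε₀ τ^t)⁻¹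
    (hrec : ∀ t : ℕ, lam (t+1) = posPart (lam t + (ε0 * τ ^ t)⁻¹ • d (x (t+1)) (y (t+1))))
    -- at each t there is a supergradient u_t, ‖u_t‖ ≤ ε_t = ε₀τ^t, of
    -- y ↦ L_y(x^{t+1}, y, λ^t; ρ_t) at y^{t+1} on Y
    (hsuper : ∀ t : ℕ, ∃ u : EuclideanSpace ℝ (Fin m), ‖u‖ ≤ ε0 * τ ^ t ∧ ∀ y' ∈ Y,
      F (x (t+1)) y'
          - (‖posPart (lam t + (ε0 * τ ^ t)⁻¹ • d (x (t+1)) y')‖ ^ 2 - ‖lam t‖ ^ 2)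
            / (2 * (ε0 * τ ^ t)⁻¹)
        ≤ F (x (t+1)) (y (t+1))
          - (‖posPart (lam t + (ε0 * τ ^ t)⁻¹ • d (x (t+1)) (y (t+1)))‖ ^ 2 - ‖lam t‖ ^ 2)
            / (2 * (ε0 * τ ^ t)⁻¹)
          + @inner ℝ _ _ u (y' - y (t+1))) :
    ∀ k : ℕ, (ε0 * τ ^ k) * ‖lam k‖ ^ 2
      ≤ ‖lam 0‖ ^ 2
        + 2 * (sSup ((fun u : (EuclideanSpace ℝ (Fin n)) × (EuclideanSpace ℝ (Fin m)) =>
              F u.1 u.2) '' (X ×ˢ Y))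
            - sInf ((fun x' => sSup ((fun y' => F x' y') '' {y' ∈ Y | ∀ i, d x' y' i ≤ 0})) '' X)
            + Dy * ε0) / (1 - τ) := by
  have hF := ((hXcp.prod hYcp).image_of_continuousOn hFcont).isBounded
  change ∀ k, _ ≤ _ + 2 * (valueGap F d X Y + Dy * ε0) / (1 - τ)
  set C := valueGap F d X Y + Dy * ε0
  have hC : 0 ≤ C := by
    obtain ⟨hx1, hy1⟩ := hmem 0
    have hDy : 0 ≤ Dy := by simpa using hdY _ hy1 _ hy1
    exact add_nonneg (valueGap_nonneg hF hfeas ⟨_, hx1⟩) (mul_nonneg hDy hε0.le)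
  have hlam : ∀ t i, 0 ≤ lam t i
    | 0 => hlam0
    | t + 1 => by rw [hrec t]; exact posPart.nonneg _
  have step (t : ℕ) : ε0 * τ ^ t * ‖lam (t + 1)‖ ^ 2 ≤ ε0 * τ ^ t * ‖lam t‖ ^ 2 + 2 * C := by
    obtain ⟨u, hu, hsg⟩ := hsuper t
    rw [hrec t]
    exact mul_sq_norm_multiplier_update_le hF hfeas hdY (hmem t).1 (hmem t).2 (hlam t)
      (by positivity) (hu.trans (mul_le_of_le_one_right hε0.le (pow_le_one₀ hτ0.le hτ1.le))) hsg
  have hdecay (k : ℕ) :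
      ε0 * τ ^ (k + 1) * ‖lam (k + 1)‖ ^ 2 ≤ τ * (ε0 * τ ^ k * ‖lam k‖ ^ 2) + 2 * C :=
    calc ε0 * τ ^ (k + 1) * ‖lam (k + 1)‖ ^ 2 = τ * (ε0 * τ ^ k * ‖lam (k + 1)‖ ^ 2) := by ring
      _ ≤ τ * (ε0 * τ ^ k * ‖lam k‖ ^ 2 + 2 * C) := mul_le_mul_of_nonneg_left (step k) hτ0.le
      _ ≤ τ * (ε0 * τ ^ k * ‖lam k‖ ^ 2) + 2 * C := by nlinarith
  intro k
  have hb0 : ε0 * τ ^ 0 * ‖lam 0‖ ^ 2 ≤ ‖lam 0‖ ^ 2 := by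
    simpa using mul_le_of_le_one_left (sq_nonneg _) hε01
  have := le_add_div_one_sub_of_le_mul_add (b := fun k => ε0 * τ ^ k * ‖lam k‖ ^ 2)
    hτ0.le hτ1 (by positivity) (by linarith) hdecay k
  linarith

/-- Bound on the inner-constraint multipliers `λ^k` generated by the
first-order augmented Lagrangian method with penalty parameters `ρ_t = (ε₀τ^t)⁻¹`:
`ρ_k⁻¹‖λ^k‖² ≤ ‖λ⁰‖² + 2(F_hi − f*_low + D_y ε₀)/(1−τ)`. -/
theorem multiplier_growth_bound {n m mt : ℕ}
    (X : Set (EuclideanSpace ℝ (Fin n))) (Y : Set (EuclideanSpace ℝ (Fin m)))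
    (Dy : ℝ)
    (hXne : X.Nonempty) (hXcp : IsCompact X) (hXcv : Convex ℝ X)
    (hYne : Y.Nonempty) (hYcp : IsCompact Y) (hYcv : Convex ℝ Y)
    (hdY : ∀ u ∈ Y, ∀ v ∈ Y, ‖u - v‖ ≤ Dy)
    (F : EuclideanSpace ℝ (Fin n) → EuclideanSpace ℝ (Fin m) → ℝ)
    (hFcont : ContinuousOn
      (fun u : (EuclideanSpace ℝ (Fin n)) × (EuclideanSpace ℝ (Fin m)) => F u.1 u.2) (X ×ˢ Y))
    (hFconc : ∀ x ∈ X, ConcaveOn ℝ Y (F x))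
    (d : EuclideanSpace ℝ (Fin n) → EuclideanSpace ℝ (Fin m) → EuclideanSpace ℝ (Fin mt))
    (hdcont : ContinuousOn
      (fun u : (EuclideanSpace ℝ (Fin n)) × (EuclideanSpace ℝ (Fin m)) => d u.1 u.2) (X ×ˢ Y))
    (hdconv : ∀ x ∈ X, ∀ i, ConvexOn ℝ Y (fun y => d x y i))
    (hfeas : ∀ x ∈ X, ∃ y ∈ Y, ∀ i, d x y i ≤ 0)
    (τ ε0 : ℝ) (hτ0 : 0 < τ) (hτ1 : τ < 1) (hε0 : 0 < ε0) (hε01 : ε0 ≤ 1)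
    (x : ℕ → EuclideanSpace ℝ (Fin n)) (y : ℕ → EuclideanSpace ℝ (Fin m))
    (lam : ℕ → EuclideanSpace ℝ (Fin mt))
    (hmem : ∀ t : ℕ, x (t+1) ∈ X ∧ y (t+1) ∈ Y)
    (hlam0 : ∀ i, 0 ≤ lam 0 i)
    -- λ^{t+1} = [λ^t + ρ_t d(x^{t+1}, y^{t+1})]₊ with ρ_t = (ε₀ τ^t)⁻¹
    (hrec : ∀ t : ℕ, lam (t+1) = posPart (lam t + (ε0 * τ ^ t)⁻¹ • d (x (t+1)) (y (t+1))))
    -- at each t there is a supergradient u_t, ‖u_t‖ ≤ ε_t = ε₀τ^t, of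
    -- y ↦ L_y(x^{t+1}, y, λ^t; ρ_t) at y^{t+1} on Y
    (hsuper : ∀ t : ℕ, ∃ u : EuclideanSpace ℝ (Fin m), ‖u‖ ≤ ε0 * τ ^ t ∧ ∀ y' ∈ Y,
      F (x (t+1)) y'
          - (‖posPart (lam t + (ε0 * τ ^ t)⁻¹ • d (x (t+1)) y')‖ ^ 2 - ‖lam t‖ ^ 2)
            / (2 * (ε0 * τ ^ t)⁻¹)
        ≤ F (x (t+1)) (y (t+1))
          - (‖posPart (lam t + (ε0 * τ ^ t)⁻¹ • d (x (t+1)) (y (t+1)))‖ ^ 2 - ‖lam t‖ ^ 2)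
            / (2 * (ε0 * τ ^ t)⁻¹)
          + @inner ℝ _ _ u (y' - y (t+1))) :
    ∀ k : ℕ, (ε0 * τ ^ k) * ‖lam k‖ ^ 2
      ≤ ‖lam 0‖ ^ 2
        + 2 * (sSup ((fun u : (EuclideanSpace ℝ (Fin n)) × (EuclideanSpace ℝ (Fin m)) =>
              F u.1 u.2) '' (X ×ˢ Y))
            - sInf ((fun x' => sSup ((fun y' => F x' y') '' {y' ∈ Y | ∀ i, d x' y' i ≤ 0})) '' X)
            + Dy * ε0) / (1 - τ) :=
  multiplier_growth_bound_general X Y Dy hXcp hYcp hdY F hFcont d hfeas τ ε0 hτ0 hτ1 hε0 hε01 x y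
    lam hmem hlam0 hrec hsuper
end

section
/- Let X ⊆ ℝ^n and Y ⊆ ℝ^m be nonempty compact convex sets, let F : X×Y → ℝ and c : X → ℝ^{ñ}, d : X×Y → ℝ^{m̃} be continuous with each d_i(x,·) convex on Y for every x ∈ X, and assume for every x ∈ X there exists y ∈ Y with d(x,y) ≤ 0. Define the augmented Lagrangian L(x,y,λx,λy;ρ) = F(x,y) + (‖[λx + ρc(x)]_+‖² − ‖λx‖²)/(2ρ) − (‖[λy + ρd(x,y)]_+‖² − ‖λy‖²)/(2ρ), f*(x) = max{F(x,y) : y ∈ Y, d(x,y) ≤ 0}, f*_low = inf_{x∈X} f*(x), and F_hi = max_{X×Y} F. Fix ρ > 0, Λ > 0, λx ∈ ℝ^{ñ} with λx ≥ 0 and ‖λx‖ ≤ Λ, and λy ∈ ℝ^{m̃} with λy ≥ 0. If there exists x̄ ∈ X with c(x̄) ≤ 0 componentwise, then f*_low − Λ²/(2ρ) ≤ inf_{x∈X} sup_{y∈Y} L(x,y,λx,λy;ρ) ≤ F_hi + ‖λy‖²/(2ρ). -/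
/-!
The penalty `(‖[λ + ρ v]₊‖² - ‖λ‖²) / (2ρ)` is always at least `-‖λ‖² / (2ρ)`, and it is
nonpositive when `λ ≥ 0` and `v ≤ 0`, since then `0 ≤ [λ + ρ v]₊ ≤ λ` componentwise. Hence on
the feasible `y` the augmented Lagrangian dominates `F - Λ² / (2ρ)`, which gives the lower bound,
while at the feasible point `x̄` it is dominated by `F + ‖λy‖² / (2ρ)`, which gives the upper
bound. Compactness of `X × Y` keeps every supremum and infimum involved finite.
-/

open Set

section MinimaxBounds

variable {α β : Type*}

theorem BddAbove.image_of_le_add {X : Set α} {φ ψ : α → ℝ} {a : ℝ} (hφ : BddAbove (φ '' X))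
    (h : ∀ x ∈ X, ψ x ≤ φ x + a) : BddAbove (ψ '' X) := by
  obtain ⟨b, hb⟩ := hφ
  refine ⟨b + a, forall_mem_image.2 fun x hx => ?_⟩
  linarith [hb (mem_image_of_mem φ hx), h x hx]

theorem BddBelow.image_of_le_add {X : Set α} {φ ψ : α → ℝ} {a : ℝ} (hφ : BddBelow (φ '' X))
    (h : ∀ x ∈ X, φ x ≤ ψ x + a) : BddBelow (ψ '' X) := by
  obtain ⟨b, hb⟩ := hφ
  refine ⟨b - a, forall_mem_image.2 fun x hx => ?_⟩
  linarith [hb (mem_image_of_mem φ hx), h x hx]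

theorem BddAbove.image_slice {γ : Type*} [Preorder γ] {X : Set α} {Y T : Set β} {f : α → β → γ}
    (hf : BddAbove ((fun p : α × β => f p.1 p.2) '' X ×ˢ Y)) {x : α} (hx : x ∈ X) (hT : T ⊆ Y) :
    BddAbove (f x '' T) :=
  hf.mono <| image_subset_iff.2 fun _ hy => mem_image_of_mem _ (mk_mem_prod hx (hT hy))

theorem bddBelow_image_csSup_image {X : Set α} {Y : Set β} {S : α → Set β} {f : α → β → ℝ}
    (hS : ∀ x ∈ X, (S x).Nonempty) (hSY : ∀ x ∈ X, S x ⊆ Y)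
    (hbelow : BddBelow ((fun p : α × β => f p.1 p.2) '' X ×ˢ Y))
    (habove : BddAbove ((fun p : α × β => f p.1 p.2) '' X ×ˢ Y)) :
    BddBelow ((fun x => sSup (f x '' S x)) '' X) := by
  obtain ⟨m, hm⟩ := hbelow
  refine ⟨m, forall_mem_image.2 fun x hx => ?_⟩
  obtain ⟨y, hy⟩ := hS x hx
  exact (hm (mem_image_of_mem _ (mk_mem_prod hx (hSY x hx hy)))).trans
    (le_csSup (habove.image_slice hx (hSY x hx)) (mem_image_of_mem _ hy))

theorem csSup_image_le_csSup_image_add {S Y : Set β} {f g : β → ℝ} {a : ℝ} (hS : S.Nonempty)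
    (hSY : S ⊆ Y) (hg : BddAbove (g '' Y)) (h : ∀ y ∈ S, f y ≤ g y + a) :
    sSup (f '' S) ≤ sSup (g '' Y) + a :=
  csSup_le (hS.image f) <| forall_mem_image.2 fun y hy => by
    linarith [h y hy, le_csSup hg (mem_image_of_mem g (hSY hy))]

theorem csInf_image_le_csInf_image_add {X : Set α} {φ ψ : α → ℝ} {a : ℝ} (hX : X.Nonempty)
    (hφ : BddBelow (φ '' X)) (h : ∀ x ∈ X, φ x ≤ ψ x + a) :
    sInf (φ '' X) ≤ sInf (ψ '' X) + a := by
  rw [← sub_le_iff_le_add]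
  exact le_csInf (hX.image ψ) <| forall_mem_image.2 fun x hx => by
    linarith [csInf_le hφ (mem_image_of_mem φ hx), h x hx]

end MinimaxBounds

section Penalty

variable {k : ℕ}

theorem norm_posPart_le {v w : EuclideanSpace ℝ (Fin k)} (hw : ∀ i, 0 ≤ w i)
    (h : ∀ i, v i ≤ w i) : ‖posPart v‖ ≤ ‖w‖ := by
  rw [EuclideanSpace.norm_eq, EuclideanSpace.norm_eq]
  gcongr with i
  change ‖max (v i) 0‖ ≤ ‖w i‖
  rw [Real.norm_of_nonneg (le_max_right _ _), Real.norm_of_nonneg (hw i)]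
  exact max_le (h i) (hw i)

noncomputable def augPenalty (ρ : ℝ) (l v : EuclideanSpace ℝ (Fin k)) : ℝ :=
  (‖posPart (l + ρ • v)‖ ^ 2 - ‖l‖ ^ 2) / (2 * ρ)

theorem neg_sq_div_le_augPenalty {ρ : ℝ} (hρ : 0 < ρ) (l v : EuclideanSpace ℝ (Fin k)) :
    -(‖l‖ ^ 2 / (2 * ρ)) ≤ augPenalty ρ l v := by
  rw [augPenalty, ← neg_div]
  gcongr
  linarith [sq_nonneg ‖posPart (l + ρ • v)‖]

theorem augPenalty_nonpos {ρ : ℝ} (hρ : 0 < ρ) {l v : EuclideanSpace ℝ (Fin k)}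
    (hl : ∀ i, 0 ≤ l i) (hv : ∀ i, v i ≤ 0) : augPenalty ρ l v ≤ 0 := by
  have hle : ‖posPart (l + ρ • v)‖ ≤ ‖l‖ := norm_posPart_le hl fun i => by
    simpa using mul_nonpos_of_nonneg_of_nonpos hρ.le (hv i)
  exact div_nonpos_of_nonpos_of_nonneg (sub_nonpos.2 (pow_le_pow_left₀ (norm_nonneg _) hle 2))
    (by positivity)

end Penalty

theorem aug_lagrangian_minimax_bounds_general {n m nt mt : ℕ}
    (X : Set (EuclideanSpace ℝ (Fin n))) (Y : Set (EuclideanSpace ℝ (Fin m)))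
    (hXne : X.Nonempty) (hXcp : IsCompact X)
    (hYne : Y.Nonempty) (hYcp : IsCompact Y)
    (F : EuclideanSpace ℝ (Fin n) → EuclideanSpace ℝ (Fin m) → ℝ)
    (hFcont : ContinuousOn
      (fun u : (EuclideanSpace ℝ (Fin n)) × (EuclideanSpace ℝ (Fin m)) => F u.1 u.2) (X ×ˢ Y))
    (c : EuclideanSpace ℝ (Fin n) → EuclideanSpace ℝ (Fin nt))
    (d : EuclideanSpace ℝ (Fin n) → EuclideanSpace ℝ (Fin m) → EuclideanSpace ℝ (Fin mt))
    (hfeas : ∀ x ∈ X, ∃ y ∈ Y, ∀ i, d x y i ≤ 0)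
    (ρ Λ : ℝ) (hρ : 0 < ρ)
    (lx : EuclideanSpace ℝ (Fin nt)) (hlx : ∀ i, 0 ≤ lx i) (hlxΛ : ‖lx‖ ≤ Λ)
    (ly : EuclideanSpace ℝ (Fin mt)) (hly : ∀ i, 0 ≤ ly i)
    (xb : EuclideanSpace ℝ (Fin n)) (hxb : xb ∈ X) (hxbfeas : ∀ i, c xb i ≤ 0) :
    let Lfun : EuclideanSpace ℝ (Fin n) → EuclideanSpace ℝ (Fin m) → ℝ := fun x y =>
      F x y + (‖posPart (lx + ρ • c x)‖ ^ 2 - ‖lx‖ ^ 2) / (2 * ρ)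
        - (‖posPart (ly + ρ • d x y)‖ ^ 2 - ‖ly‖ ^ 2) / (2 * ρ)
    sInf ((fun x => sSup ((fun y => F x y) '' {y ∈ Y | ∀ i, d x y i ≤ 0})) '' X)
        - Λ ^ 2 / (2 * ρ)
      ≤ sInf ((fun x => sSup ((fun y => Lfun x y) '' Y)) '' X)
    ∧ sInf ((fun x => sSup ((fun y => Lfun x y) '' Y)) '' X)
      ≤ sSup ((fun u : (EuclideanSpace ℝ (Fin n)) × (EuclideanSpace ℝ (Fin m)) =>
          F u.1 u.2) '' (X ×ˢ Y)) + ‖ly‖ ^ 2 / (2 * ρ) := by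
  intro L
  have hL : ∀ x y, L x y = F x y + augPenalty ρ lx (c x) - augPenalty ρ ly (d x y) :=
    fun _ _ => rfl
  have hFabove := (hXcp.prod hYcp).bddAbove_image hFcont
  have hFbelow := (hXcp.prod hYcp).bddBelow_image hFcont
  have hlxsq : ‖lx‖ ^ 2 / (2 * ρ) ≤ Λ ^ 2 / (2 * ρ) := by gcongr
  have hF_le_L : ∀ x y, (∀ i, d x y i ≤ 0) → F x y ≤ L x y + Λ ^ 2 / (2 * ρ) := fun x y hy => by
    linarith [hL x y, neg_sq_div_le_augPenalty hρ lx (c x), augPenalty_nonpos hρ hly hy]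
  have hL_le_F : ∀ x y, L x y ≤ F x y + (augPenalty ρ lx (c x) + ‖ly‖ ^ 2 / (2 * ρ)) :=
    fun x y => by linarith [hL x y, neg_sq_div_le_augPenalty hρ ly (d x y)]
  have hLabove : ∀ x ∈ X, BddAbove (L x '' Y) := fun x hx =>
    (hFabove.image_slice hx subset_rfl).image_of_le_add fun y _ => hL_le_F x y
  have hsup : ∀ x ∈ X,
      sSup (F x '' {y ∈ Y | ∀ i, d x y i ≤ 0}) ≤ sSup (L x '' Y) + Λ ^ 2 / (2 * ρ) :=
    fun x hx => csSup_image_le_csSup_image_add (hfeas x hx) (sep_subset _ _) (hLabove x hx)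
      fun y hy => hF_le_L x y hy.2
  have hfbelow := bddBelow_image_csSup_image hfeas (fun _ _ => sep_subset _ _) hFbelow hFabove
  refine ⟨sub_le_iff_le_add.2 (csInf_image_le_csInf_image_add hXne hfbelow hsup), ?_⟩
  calc sInf ((fun x => sSup (L x '' Y)) '' X) ≤ sSup (L xb '' Y) :=
        csInf_le (hfbelow.image_of_le_add hsup) (mem_image_of_mem _ hxb)
    _ ≤ _ := csSup_le (hYne.image _) <| forall_mem_image.2 fun y hy => by
        linarith [hL_le_F xb y, augPenalty_nonpos hρ hlx hxbfeas,
          le_csSup hFabove (mem_image_of_mem _ (mk_mem_prod hxb hy))]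

/-- Two-sided bound on the minimax value of the augmented Lagrangian
subproblem: `f*_low − Λ²/(2ρ) ≤ inf_{x∈X} sup_{y∈Y} L(x,y,λx,λy;ρ) ≤ F_hi + ‖λy‖²/(2ρ)`. -/
theorem aug_lagrangian_minimax_bounds {n m nt mt : ℕ}
    (X : Set (EuclideanSpace ℝ (Fin n))) (Y : Set (EuclideanSpace ℝ (Fin m)))
    (hXne : X.Nonempty) (hXcp : IsCompact X) (hXcv : Convex ℝ X)
    (hYne : Y.Nonempty) (hYcp : IsCompact Y) (hYcv : Convex ℝ Y)
    (F : EuclideanSpace ℝ (Fin n) → EuclideanSpace ℝ (Fin m) → ℝ)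
    (hFcont : ContinuousOn
      (fun u : (EuclideanSpace ℝ (Fin n)) × (EuclideanSpace ℝ (Fin m)) => F u.1 u.2) (X ×ˢ Y))
    (hFconc : ∀ x ∈ X, ConcaveOn ℝ Y (F x))
    (c : EuclideanSpace ℝ (Fin n) → EuclideanSpace ℝ (Fin nt))
    (hccont : ContinuousOn c X)
    (d : EuclideanSpace ℝ (Fin n) → EuclideanSpace ℝ (Fin m) → EuclideanSpace ℝ (Fin mt))
    (hdcont : ContinuousOn
      (fun u : (EuclideanSpace ℝ (Fin n)) × (EuclideanSpace ℝ (Fin m)) => d u.1 u.2) (X ×ˢ Y))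
    (hdconv : ∀ x ∈ X, ∀ i, ConvexOn ℝ Y (fun y => d x y i))
    (hfeas : ∀ x ∈ X, ∃ y ∈ Y, ∀ i, d x y i ≤ 0)
    (ρ Λ : ℝ) (hρ : 0 < ρ) (hΛ : 0 < Λ)
    (lx : EuclideanSpace ℝ (Fin nt)) (hlx : ∀ i, 0 ≤ lx i) (hlxΛ : ‖lx‖ ≤ Λ)
    (ly : EuclideanSpace ℝ (Fin mt)) (hly : ∀ i, 0 ≤ ly i)
    (xb : EuclideanSpace ℝ (Fin n)) (hxb : xb ∈ X) (hxbfeas : ∀ i, c xb i ≤ 0) :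
    let Lfun : EuclideanSpace ℝ (Fin n) → EuclideanSpace ℝ (Fin m) → ℝ := fun x y =>
      F x y + (‖posPart (lx + ρ • c x)‖ ^ 2 - ‖lx‖ ^ 2) / (2 * ρ)
        - (‖posPart (ly + ρ • d x y)‖ ^ 2 - ‖ly‖ ^ 2) / (2 * ρ)
    sInf ((fun x => sSup ((fun y => F x y) '' {y ∈ Y | ∀ i, d x y i ≤ 0})) '' X)
        - Λ ^ 2 / (2 * ρ)
      ≤ sInf ((fun x => sSup ((fun y => Lfun x y) '' Y)) '' X)
    ∧ sInf ((fun x => sSup ((fun y => Lfun x y) '' Y)) '' X)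
      ≤ sSup ((fun u : (EuclideanSpace ℝ (Fin n)) × (EuclideanSpace ℝ (Fin m)) =>
          F u.1 u.2) '' (X ×ˢ Y)) + ‖ly‖ ^ 2 / (2 * ρ) :=
  aug_lagrangian_minimax_bounds_general X Y hXne hXcp hYne hYcp F hFcont c d hfeas ρ Λ hρ lx hlx
    hlxΛ ly hly xb hxb hxbfeas
end
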